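/- arXiv:1801.08649 — 3 statements merged into one kernel-verified Lean document; each statement's English description precedes it below -/
import Mathlib

section
/- Let G = (V, E) be a finite simple graph and let (\{C_i\}_{i=1}^s, \{H_i\}_{i=1}^s) be a CH-partitioning of G. Then the clique number of G equals max_{1 ≤ i ≤ s} k_i, where k_i is the clique number of the subgraph of G induced by C_i ∪ H_i. -/
/-!
A clique of `G` that contains a vertex `v` of the core `C i` lies in `C i ∪ H i`: each of its
other vertices is either in `C i` or adjacent to `v ∈ C i`, hence in the halo. Since the cores
cover `V`, a maximum clique of `G` is therefore a clique of one of the induced subgraphs, and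
conversely every induced subgraph has clique number at most `ω(G)`.
-/

namespace SimpleGraph

open Finset

variable {V : Type*} (G : SimpleGraph V)

def halo (C : Set V) : Set V := {w | w ∉ C ∧ ∃ u ∈ C, G.Adj u w}

variable {G}

theorem IsClique.subset_union_halo {t : Set V} (ht : G.IsClique t) {C : Set V} {v : V}
    (hvt : v ∈ t) (hvC : v ∈ C) : t ⊆ C ∪ G.halo C := by
  intro w hwt
  by_cases hwC : w ∈ C
  · exact Or.inl hwC
  · have hvw : v ≠ w := fun h => hwC (h ▸ hvC)
    exact Or.inr ⟨hwC, v, hvC, ht hvt hwt hvw⟩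

theorem IsClique.card_le_cliqueNum_induce [Finite V] {s : Set V} {t : Finset V}
    (ht : G.IsClique (t : Set V)) (hts : (t : Set V) ⊆ s) : #t ≤ (G.induce s).cliqueNum := by
  classical
  have hmap : (t.subtype (· ∈ s)).map (.subtype _) = t := Finset.subtype_map_of_mem hts
  have hclique : (G.induce s).IsNClique #t (t.subtype (· ∈ s)) := by
    rw [isNClique_induce_iff, hmap]
    exact ⟨ht, rfl⟩
  exact hclique.card_eq ▸ hclique.isClique.card_le_cliqueNum

theorem cliqueNum_eq_sup_cliqueNum_induce [Finite V] {ι : Type*} (I : Finset ι) (S : ι → Set V)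
    (hS : ∀ t : Finset V, G.IsClique (t : Set V) → t.Nonempty → ∃ i ∈ I, (t : Set V) ⊆ S i) :
    G.cliqueNum = I.sup fun i => (G.induce (S i)).cliqueNum := by
  refine le_antisymm ?_ (Finset.sup_le fun i _ => G.cliqueNum_induce_le (S i))
  obtain ⟨t, ht⟩ := G.exists_isNClique_cliqueNum
  rcases t.eq_empty_or_nonempty with rfl | hne
  · simp [← ht.card_eq]
  obtain ⟨i, hi, hts⟩ := hS t ht.isClique hne
  calc G.cliqueNum = #t := ht.card_eq.symm
    _ ≤ (G.induce (S i)).cliqueNum := ht.isClique.card_le_cliqueNum_induce hts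
    _ ≤ _ := Finset.le_sup (f := fun i => (G.induce (S i)).cliqueNum) hi

end SimpleGraph

theorem ch_partitioning_clique_num_general {V : Type*} [Fintype V] (G : SimpleGraph V)
    (s : ℕ) (C H : Fin s → Set V)
    (hC_cover : ⋃ i, C i = Set.univ)
    (hH : ∀ i, H i = {w | w ∉ C i ∧ ∃ u ∈ C i, G.Adj u w}) :
    G.cliqueNum = Finset.univ.sup (fun i : Fin s => (G.induce (C i ∪ H i)).cliqueNum) := by
  refine G.cliqueNum_eq_sup_cliqueNum_induce _ _ fun t ht ⟨v, hv⟩ => ?_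
  obtain ⟨i, hvi⟩ := Set.mem_iUnion.mp (hC_cover ▸ Set.mem_univ v)
  exact ⟨i, Finset.mem_univ i, hH i ▸ ht.subset_union_halo hv hvi⟩

/-- For a CH-partitioning `({C i}, {H i})` of a finite simple graph `G`
(nonempty, pairwise-disjoint cores covering `V`; halo `H i` = neighbors of `C i` outside `C i`),
the clique number of `G` equals the maximum over `i` of the clique number of the subgraph
induced by `C i ∪ H i`. -/
theorem ch_partitioning_clique_num {V : Type*} [Fintype V] (G : SimpleGraph V)
    (s : ℕ) (hs : 0 < s) (C H : Fin s → Set V)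
    (hC_nonempty : ∀ i, (C i).Nonempty)
    (hC_cover : ⋃ i, C i = Set.univ)
    (hC_disjoint : ∀ i j, i ≠ j → C i ∩ C j = ∅)
    (hH : ∀ i, H i = {w | w ∉ C i ∧ ∃ u ∈ C i, G.Adj u w}) :
    G.cliqueNum = Finset.univ.sup (fun i : Fin s => (G.induce (C i ∪ H i)).cliqueNum) :=
  ch_partitioning_clique_num_general G s C H hC_cover hH
end

section
/- Let G = (V, E) be a finite simple graph with at least one vertex, and for x : V → {0, 1} define H(x) = −∑_{v ∈ V} x_v + 2 ∑_{{u,v}} x_u x_v, where the second sum is over all unordered pairs {u, v} of distinct vertices that are NOT adjacent in G. Then the minimum of H(x) over all x : V → {0, 1} equals −ω(G), where ω(G) is the clique number of G. -/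
/-!
Identify `x : V → {0, 1}` with its support `s`. Then `H(x) = -#s + 2m`, where `m` is the number of
non-edges of `G` inside `s`. A maximum clique gives `m = 0` and `H = -ω(G)`. Conversely, choosing
one endpoint of each non-edge inside `s` gives a set `t` with `#t ≤ m` whose removal leaves a
clique, so `#s ≤ ω(G) + m` and `H(x) ≥ -ω(G) + m ≥ -ω(G)`.
-/

open Finset

namespace SimpleGraph

variable {V : Type*} [Fintype V] [DecidableEq V] (G : SimpleGraph V) [DecidableRel G.Adj]

def quboEnergy (x : V → ℤ) : ℤ :=
  -(∑ v, x v) +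
    2 * ∑ e ∈ Gᶜ.edgeFinset, Sym2.lift ⟨fun u w => x u * x w, fun _ _ => mul_comm _ _⟩ e

def nonEdgesWithin (s : Finset V) : Finset (Sym2 V) :=
  {e ∈ Gᶜ.edgeFinset | e ∈ s.sym2}

variable {G}

theorem nonEdgesWithin_eq_empty_iff {s : Finset V} :
    G.nonEdgesWithin s = ∅ ↔ G.IsClique (s : Set V) := by
  simp only [nonEdgesWithin, filter_eq_empty_iff, mem_edgeFinset, isClique_iff, Set.Pairwise,
    mem_coe]
  constructor
  · intro h u hu w hw huw
    by_contra hadj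
    exact h (x := s(u, w)) (by simp [huw, hadj]) (by simp [hu, hw])
  · intro h e he hes
    induction e with
    | h u w =>
      rw [mem_edgeSet, compl_adj] at he
      rw [mem_sym2_iff] at hes
      exact he.2 (h (hes u (by simp)) (hes w (by simp)) he.1)

theorem card_le_cliqueNum_add_card_nonEdgesWithin (s : Finset V) :
    #s ≤ G.cliqueNum + #(G.nonEdgesWithin s) := by
  -- `t` is a vertex cover of the non-edges inside `s`, so `s \ t` is a clique.
  set t := (G.nonEdgesWithin s).image fun e => e.out.1
  have hclique : G.IsClique ((s \ t : Finset V) : Set V) := by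
    rw [← nonEdgesWithin_eq_empty_iff, eq_empty_iff_forall_notMem]
    intro e he
    have hmem : e.out.1 ∈ s \ t := (mem_sym2_iff.mp (mem_filter.mp he).2) _ (Sym2.out_fst_mem e)
    refine (mem_sdiff.mp hmem).2 (mem_image_of_mem _ ?_)
    simp only [nonEdgesWithin, mem_filter, mem_sym2_iff] at he ⊢
    exact ⟨he.1, fun v hv => (mem_sdiff.mp (he.2 v hv)).1⟩
  calc #s ≤ #(s \ t) + #t := card_le_card_sdiff_add_card
    _ ≤ G.cliqueNum + #(G.nonEdgesWithin s) :=
      add_le_add hclique.card_le_cliqueNum card_image_le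

theorem quboEnergy_indicator (s : Finset V) :
    G.quboEnergy (fun v => if v ∈ s then 1 else 0) = -#s + 2 * #(G.nonEdgesWithin s) := by
  have hlift (e : Sym2 V) : Sym2.lift ⟨fun u w => (if u ∈ s then (1 : ℤ) else 0) *
      (if w ∈ s then 1 else 0), fun _ _ => mul_comm _ _⟩ e = if e ∈ s.sym2 then 1 else 0 := by
    induction e with
    | h u w => by_cases hu : u ∈ s <;> by_cases hw : w ∈ s <;> simp [hu, hw]
  simp only [quboEnergy, hlift, sum_boole, nonEdgesWithin, filter_mem_eq_inter, univ_inter]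

theorem eq_indicator_of_forall_eq_zero_or_eq_one {x : V → ℤ} (hx : ∀ v, x v = 0 ∨ x v = 1) :
    x = fun v => if v ∈ ({v | x v = 1} : Finset V) then 1 else 0 := by
  funext v
  rcases hx v with h | h <;> simp [h]

end SimpleGraph

theorem qubo_min_eq_neg_clique_num_general {V : Type*} [Fintype V] [DecidableEq V]
    (G : SimpleGraph V) [DecidableRel G.Adj] :
    IsLeast
      {z : ℤ | ∃ x : V → ℤ, (∀ v, x v = 0 ∨ x v = 1) ∧
        z = -(∑ v, x v) +
          2 * ∑ e ∈ Gᶜ.edgeFinset, Sym2.lift ⟨fun u w => x u * x w, fun u w => mul_comm _ _⟩ e}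
      (-(G.cliqueNum : ℤ)) := by
  change IsLeast {z : ℤ | ∃ x : V → ℤ, (∀ v, x v = 0 ∨ x v = 1) ∧ z = G.quboEnergy x} _
  constructor
  · obtain ⟨s, hs⟩ := G.exists_isNClique_cliqueNum
    refine ⟨fun v => if v ∈ s then 1 else 0, fun v => by by_cases hv : v ∈ s <;> simp [hv], ?_⟩
    rw [G.quboEnergy_indicator, SimpleGraph.nonEdgesWithin_eq_empty_iff.mpr hs.isClique,
      hs.card_eq]
    simp
  · rintro z ⟨x, hx, rfl⟩
    rw [SimpleGraph.eq_indicator_of_forall_eq_zero_or_eq_one hx, G.quboEnergy_indicator]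
    have := G.card_le_cliqueNum_add_card_nonEdgesWithin {v | x v = 1}
    omega

/-- For a finite simple graph `G` with at least one vertex and
`H(x) = -∑ v, x v + 2 * ∑_{ {u,v} non-adjacent, u ≠ v } x u * x v` (second sum over the edges
of the complement graph `Gᶜ`), the minimum of `H` over all `x : V → {0,1}` is `-ω(G)`. -/
theorem qubo_min_eq_neg_clique_num {V : Type*} [Fintype V] [DecidableEq V] [Nonempty V]
    (G : SimpleGraph V) [DecidableRel G.Adj] :
    IsLeast
      {z : ℤ | ∃ x : V → ℤ, (∀ v, x v = 0 ∨ x v = 1) ∧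
        z = -(∑ v, x v) +
          2 * ∑ e ∈ Gᶜ.edgeFinset, Sym2.lift ⟨fun u w => x u * x w, fun u w => mul_comm _ _⟩ e}
      (-(G.cliqueNum : ℤ)) :=
  qubo_min_eq_neg_clique_num_general G
end

section
/- Let G = (V, E) be a finite simple graph with at least one vertex, and for x : V → {0, 1} define H(x) = −∑_{v ∈ V} x_v + 2 ∑_{{u,v}} x_u x_v, where the second sum is over all unordered pairs {u, v} of distinct vertices that are NOT adjacent in G. Then x minimizes H over all functions V → {0, 1} if and only if the support {v ∈ V : x_v = 1} of x is a maximum clique of G. -/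
/-! For a 0/1 vector with support `t`, the energy is `-#t + 2m`, where `m` counts the non-adjacent
pairs inside `t`. Deleting one endpoint of each such pair leaves a clique `c ⊆ t` with
`#t ≤ #c + m`, so the energy is at least `-#c + m ≥ -ω(G) + m`. Hence the energy is bounded below
by `-ω(G)`, with equality exactly when `m = 0` and `#t = ω(G)`, i.e. when `t` is a maximum clique. -/

open Finset

namespace SimpleGraph

variable {V : Type*} [Fintype V] [DecidableEq V] (G : SimpleGraph V) [DecidableRel G.Adj]

def cliqueQubo (x : V → ℤ) : ℤ :=
  -(∑ v, x v) + 2 * ∑ e ∈ Gᶜ.edgeFinset, Sym2.lift ⟨fun u w => x u * x w, fun _ _ => mul_comm _ _⟩ e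

def nonEdgesIn (t : Finset V) : Finset (Sym2 V) := {e ∈ Gᶜ.edgeFinset | e ∈ t.sym2}

variable {G}

theorem nonEdgesIn_mono {s t : Finset V} (h : s ⊆ t) : G.nonEdgesIn s ⊆ G.nonEdgesIn t :=
  monotone_filter_right _ fun _ _ he => sym2_mono h he

theorem mk_mem_nonEdgesIn_iff {t : Finset V} {u w : V} :
    s(u, w) ∈ G.nonEdgesIn t ↔ u ∈ t ∧ w ∈ t ∧ u ≠ w ∧ ¬G.Adj u w := by
  simp only [nonEdgesIn, mem_filter, mem_edgeFinset, mem_edgeSet, compl_adj, mk_mem_sym2_iff]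
  tauto

theorem nonEdgesIn_eq_empty_iff {t : Finset V} :
    G.nonEdgesIn t = ∅ ↔ G.IsClique (t : Set V) := by
  refine ⟨fun h u hu w hw huw => ?_, fun h => eq_empty_of_forall_notMem fun e he => ?_⟩
  · by_contra hadj
    exact notMem_empty _ (h ▸ mk_mem_nonEdgesIn_iff.2 ⟨hu, hw, huw, hadj⟩)
  · induction e using Sym2.ind with
    | _ u w =>
      obtain ⟨hu, hw, huw, hadj⟩ := mk_mem_nonEdgesIn_iff.1 he
      exact hadj (h hu hw huw)

theorem exists_isClique_subset_card_le (t : Finset V) :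
    ∃ c ⊆ t, G.IsClique (c : Set V) ∧ #t ≤ #c + #(G.nonEdgesIn t) := by
  induction t using Finset.strongInduction with
  | H t ih =>
    by_cases ht : G.IsClique (t : Set V)
    · exact ⟨t, subset_rfl, ht, le_self_add⟩
    obtain ⟨u, hu, w, hw, huw, hadj⟩ : ∃ u ∈ t, ∃ w ∈ t, u ≠ w ∧ ¬G.Adj u w := by
      simpa [IsClique, Set.Pairwise] using ht
    obtain ⟨c, hct, hc, hcard⟩ := ih (t.erase u) (erase_ssubset hu)
    have hfewer : #(G.nonEdgesIn (t.erase u)) < #(G.nonEdgesIn t) := by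
      refine card_lt_card (Finset.ssubset_iff_subset_ne.2 ⟨nonEdgesIn_mono (erase_subset u t), ?_⟩)
      intro heq
      have huw_mem : s(u, w) ∈ G.nonEdgesIn t := mk_mem_nonEdgesIn_iff.2 ⟨hu, hw, huw, hadj⟩
      rw [← heq, mk_mem_nonEdgesIn_iff] at huw_mem
      exact notMem_erase u t huw_mem.1
    have := card_erase_of_mem hu
    exact ⟨c, hct.trans (erase_subset u t), hc, by omega⟩

theorem cliqueQubo_eq_of_zero_or_one {x : V → ℤ} (hx : ∀ v, x v = 0 ∨ x v = 1) :
    G.cliqueQubo x = -#{v | x v = 1} + 2 * #(G.nonEdgesIn {v | x v = 1}) := by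
  have hsum : ∑ v, x v = #{v | x v = 1} := by
    rw [card_filter, Nat.cast_sum]
    exact sum_congr rfl fun v _ => by rcases hx v with h | h <;> simp [h]
  have hpairs : ∀ e : Sym2 V, Sym2.lift ⟨fun u w => x u * x w, fun _ _ => mul_comm _ _⟩ e =
      if e ∈ ({v | x v = 1} : Finset V).sym2 then 1 else 0 := by
    refine Sym2.ind fun u w => ?_
    rcases hx u with hu | hu <;> rcases hx w with hw | hw <;> simp [hu, hw]
  simp only [cliqueQubo, hsum, hpairs, sum_boole, nonEdgesIn]

theorem cliqueQubo_indicator_of_isClique {c : Finset V} (hc : G.IsClique (c : Set V)) :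
    G.cliqueQubo (fun v => if v ∈ c then 1 else 0) = -#c := by
  have hsupp : ({v | (if v ∈ c then 1 else 0 : ℤ) = 1} : Finset V) = c := by ext v; simp
  rw [cliqueQubo_eq_of_zero_or_one fun v => by by_cases hv : v ∈ c <;> simp [hv], hsupp,
    nonEdgesIn_eq_empty_iff.2 hc, card_empty]
  ring

theorem isMinimizer_cliqueQubo_iff {x : V → ℤ} (hx : ∀ v, x v = 0 ∨ x v = 1) :
    (∀ y : V → ℤ, (∀ v, y v = 0 ∨ y v = 1) → G.cliqueQubo x ≤ G.cliqueQubo y) ↔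
      G.IsClique (({v | x v = 1} : Finset V) : Set V) ∧
        ∀ c : Finset V, G.IsClique (c : Set V) → #c ≤ #{v | x v = 1} := by
  rw [cliqueQubo_eq_of_zero_or_one hx]
  constructor
  · intro hmin
    have hle_clique {c : Finset V} (hc : G.IsClique (c : Set V)) :
        -(#{v | x v = 1} : ℤ) + 2 * #(G.nonEdgesIn {v | x v = 1}) ≤ -#c := by
      rw [← cliqueQubo_indicator_of_isClique hc]
      exact hmin _ fun v => by by_cases hv : v ∈ c <;> simp [hv]
    obtain ⟨c, -, hc, hcx⟩ := exists_isClique_subset_card_le (G := G) {v | x v = 1}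
    have hx_clique : G.IsClique (({v | x v = 1} : Finset V) : Set V) := by
      rw [← nonEdgesIn_eq_empty_iff, ← card_eq_zero]
      have := hle_clique hc
      omega
    refine ⟨hx_clique, fun T hT => ?_⟩
    have := hle_clique hT
    rw [nonEdgesIn_eq_empty_iff.2 hx_clique, card_empty] at this
    omega
  · rintro ⟨hx_clique, hmax⟩ y hy
    rw [cliqueQubo_eq_of_zero_or_one hy, nonEdgesIn_eq_empty_iff.2 hx_clique]
    obtain ⟨c, -, hc, hcy⟩ := exists_isClique_subset_card_le (G := G) {v | y v = 1}
    have := hmax c hc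
    simp only [card_empty]
    omega

end SimpleGraph

theorem qubo_minimizer_iff_maximum_clique_general {V : Type*} [Fintype V] [DecidableEq V]
    (G : SimpleGraph V) [DecidableRel G.Adj] (x : V → ℤ) (hx : ∀ v, x v = 0 ∨ x v = 1) :
    (∀ y : V → ℤ, (∀ v, y v = 0 ∨ y v = 1) →
      -(∑ v, x v) +
          2 * ∑ e ∈ Gᶜ.edgeFinset, Sym2.lift ⟨fun u w => x u * x w, fun u w => mul_comm _ _⟩ e ≤
        -(∑ v, y v) +
          2 * ∑ e ∈ Gᶜ.edgeFinset, Sym2.lift ⟨fun u w => y u * y w, fun u w => mul_comm _ _⟩ e) ↔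
    (G.IsClique {v | x v = 1} ∧
      ∀ S : Set V, G.IsClique S → S.ncard ≤ {v | x v = 1}.ncard) := by
  have hx_supp : ({v | x v = 1} : Set V) = (({v | x v = 1} : Finset V) : Set V) := by simp
  rw [hx_supp, Set.ncard_coe_finset]
  refine (G.isMinimizer_cliqueQubo_iff hx).trans (and_congr_right fun _ => ⟨fun h T hT => ?_, ?_⟩)
  · rw [Set.ncard_eq_toFinset_card T]
    exact h _ (by simpa using hT)
  · intro h c hc
    simpa using h c hc

/-- For a finite simple graph `G` with at least one vertex and
`H(x) = -∑ v, x v + 2 * ∑_{ {u,v} non-adjacent, u ≠ v } x u * x v` (second sum over the edges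
of the complement graph `Gᶜ`), a function `x : V → {0,1}` minimizes `H` iff its support
`{v | x v = 1}` is a maximum clique of `G`. -/
theorem qubo_minimizer_iff_maximum_clique {V : Type*} [Fintype V] [DecidableEq V] [Nonempty V]
    (G : SimpleGraph V) [DecidableRel G.Adj] (x : V → ℤ) (hx : ∀ v, x v = 0 ∨ x v = 1) :
    (∀ y : V → ℤ, (∀ v, y v = 0 ∨ y v = 1) →
      -(∑ v, x v) +
          2 * ∑ e ∈ Gᶜ.edgeFinset, Sym2.lift ⟨fun u w => x u * x w, fun u w => mul_comm _ _⟩ e ≤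
        -(∑ v, y v) +
          2 * ∑ e ∈ Gᶜ.edgeFinset, Sym2.lift ⟨fun u w => y u * y w, fun u w => mul_comm _ _⟩ e) ↔
    (G.IsClique {v | x v = 1} ∧
      ∀ S : Set V, G.IsClique S → S.ncard ≤ {v | x v = 1}.ncard) :=
  qubo_minimizer_iff_maximum_clique_general G x hx
end
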